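/- For a rigid body with block-diagonal inertia Λ = diag(I, m·Id₃) and velocity V₁ = (ω₁, v₁) ∈ ℝ⁶, the matrix C̃(V₁) = ad_{V₁}^* Λ + ad^∼_{Λ V₁} − Λ ad_{V₁} is skew-symmetric, where for a momentum h = (h_ω, h_v) = Λ V₁ the operator ad^∼_h is the 6×6 matrix [[h_{ω×}, h_{v×}],[h_{v×}, 0]]. -/
import Mathlib


open Matrix

noncomputable section

def skew3 (a : Fin 3 → ℝ) : Matrix (Fin 3) (Fin 3) ℝ :=
  !![0, -a 2, a 1; a 2, 0, -a 0; -a 1, a 0, 0]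

def ad6 (X : Fin 3 ⊕ Fin 3 → ℝ) : Matrix (Fin 3 ⊕ Fin 3) (Fin 3 ⊕ Fin 3) ℝ :=
  Matrix.fromBlocks (skew3 (X ∘ Sum.inl)) 0 (skew3 (X ∘ Sum.inr)) (skew3 (X ∘ Sum.inl))

/-- ad^∼ operator of a momentum h = (h_ω, h_v): [[h_{ω×}, h_{v×}],[h_{v×}, 0]] -/
def adSim (h : Fin 3 ⊕ Fin 3 → ℝ) : Matrix (Fin 3 ⊕ Fin 3) (Fin 3 ⊕ Fin 3) ℝ :=
  Matrix.fromBlocks (skew3 (h ∘ Sum.inl)) (skew3 (h ∘ Sum.inr)) (skew3 (h ∘ Sum.inr)) 0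

/-- C̃(V₁) = ad_{V₁}^* Λ + ad^∼_{Λ V₁} − Λ ad_{V₁} is skew-symmetric,
for Λ = diag(I, m·Id₃) with I symmetric. -/
theorem Ctilde_skew_symmetric
    (I : Matrix (Fin 3) (Fin 3) ℝ) (hI : I.IsSymm) (m : ℝ)
    (V₁ : Fin 3 ⊕ Fin 3 → ℝ) :
    let Λ : Matrix (Fin 3 ⊕ Fin 3) (Fin 3 ⊕ Fin 3) ℝ :=
      Matrix.fromBlocks I 0 0 (m • (1 : Matrix (Fin 3) (Fin 3) ℝ))
    let C := (ad6 V₁)ᵀ * Λ + adSim (Λ.mulVec V₁) - Λ * ad6 V₁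
    Cᵀ = -C := by
  intro Λ C
  have hIe : ∀ i j, I j i = I i j := fun i j => by
    conv_lhs => rw [← hI]
    rfl
  ext i j
  simp only [C, Λ, Matrix.transpose_apply, Matrix.neg_apply, Matrix.add_apply,
    Matrix.sub_apply, Matrix.mul_apply, Matrix.mulVec, dotProduct,
    Fintype.sum_sum_type, ad6, adSim, skew3]
  cases i <;> cases j <;>
    simp only [Matrix.fromBlocks_apply₁₁, Matrix.fromBlocks_apply₁₂,
      Matrix.fromBlocks_apply₂₁, Matrix.fromBlocks_apply₂₂, Function.comp,
      Matrix.smul_apply, Matrix.one_apply, Matrix.zero_apply, Fin.sum_univ_three,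
      smul_eq_mul] <;>
  · rename_i a b
    fin_cases a <;> fin_cases b <;>
      simp [Matrix.cons_val_zero, Matrix.cons_val_one, hIe] <;> ring
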